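/- Let A be a multiring and a,b ∈ A. The following are equivalent: (a) D(a) ⊆ D(b); (b) √((a)) ⊆ √((b)); (c) a ∈ √((b)); (d) S_b ⊆ S_a. -/

import Mathlib

universe u v

/-- A multiring: a commutative monoid with a multivalued addition. -/
class Multiring (A : Type u) extends CommMonoid A, Zero A, Neg A where
  /-- the multivalued sum: `madd b c` is the set `b + c` -/
  madd : A → A → Set A
  madd_nonempty : ∀ a b : A, (madd a b).Nonempty
  madd_rev_left : ∀ a b c : A, a ∈ madd b c → c ∈ madd (-b) a
  madd_rev_right : ∀ a b c : A, a ∈ madd b c → b ∈ madd a (-c)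
  mem_madd_zero : ∀ a b : A, a ∈ madd b 0 ↔ a = b
  madd_assoc : ∀ a b c g x : A, g ∈ madd a b → x ∈ madd g c →
    ∃ h ∈ madd b c, x ∈ madd a h
  madd_comm : ∀ a b : A, madd a b = madd b a
  mul_zero' : ∀ a : A, a * 0 = 0
  madd_mul : ∀ a b c d : A, a ∈ madd b c → a * d ∈ madd (b * d) (c * d)

namespace Multiring

variable {A : Type u} [Multiring A]

/-- the iterated multivalued sum `x₁ + ⋯ + xₙ = {x₁} + (x₂ + ⋯ + xₙ)` of a list -/
def listSum : List A → Set A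
  | [] => {(0 : A)}
  | a :: l => {x : A | ∃ y ∈ listSum l, x ∈ madd a y}

/-- an ideal of a multiring: a nonempty subset with `I + I ⊆ I` and `A·I ⊆ I` -/
def IsIdeal (I : Set A) : Prop :=
  I.Nonempty ∧ (∀ a ∈ I, ∀ b ∈ I, madd a b ⊆ I) ∧ ∀ a : A, ∀ b ∈ I, a * b ∈ I

/-- a prime ideal: a proper ideal such that `a*b ∈ p → a ∈ p ∨ b ∈ p` -/
def IsPrimeIdeal (I : Set A) : Prop :=
  IsIdeal I ∧ (1 : A) ∉ I ∧ ∀ a b : A, a * b ∈ I → a ∈ I ∨ b ∈ I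

/-- a maximal ideal: a proper ideal maximal among proper ideals -/
def IsMaximalIdeal (I : Set A) : Prop :=
  IsIdeal I ∧ (1 : A) ∉ I ∧ ∀ J : Set A, IsIdeal J → (1 : A) ∉ J → I ⊆ J → J = I

/-- a multiplicative subset -/
def IsMultiplicative (S : Set A) : Prop :=
  (1 : A) ∈ S ∧ ∀ s ∈ S, ∀ t ∈ S, s * t ∈ S

/-- a hyperring: a multiring with the strong distributivity property -/
def IsHyperring (A : Type u) [Multiring A] : Prop :=
  ∀ x b c d : A, x ∈ madd (b * d) (c * d) → ∃ a ∈ madd b c, x = a * d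

/-- a von Neumann (regular) hyperring -/
def IsVonNeumann (A : Type u) [Multiring A] : Prop :=
  IsHyperring A ∧ ∀ a : A, ∃ b : A, a = a * a * b

/-- the equivalence modulo an ideal `I`: `a ∼_I b` iff `(a + (-b)) ∩ I ≠ ∅`;
this is equality of classes in the quotient multiring `A/I`. -/
def simI (I : Set A) (a b : A) : Prop := ∃ x ∈ madd a (-b), x ∈ I

/-- membership of classes in the multivalued sum of the quotient `A/I`:
`[a] ∈ [b] + [c]` iff `a ∈ b + c + i` for some `i ∈ I`. -/
def qmemI (I : Set A) (a b c : A) : Prop := ∃ i ∈ I, ∃ w ∈ madd c i, a ∈ madd b w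

/-- representatives `x` with `[x] ∈ [c₁] + ⋯ + [cₙ]` in the quotient `A/I` -/
def qlistSumI (I : Set A) : List A → Set A
  | [] => {x : A | simI I x 0}
  | c :: l => {x : A | ∃ y ∈ qlistSumI I l, qmemI I x c y}

/-- the quotient multiring `A/I` is a multifield: `1 ≠ 0` and every nonzero
element is weak-invertible -/
def QuotIsMultifield (I : Set A) : Prop :=
  ¬ simI I 1 0 ∧
    ∀ a : A, ¬ simI I a 0 →
      ∃ l : List A, l ≠ [] ∧ (1 : A) ∈ qlistSumI I (l.map fun b => a * b)

/-- the quotient multiring `A/I` is a hyperfield: `1 ≠ 0` and every nonzero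
element is invertible -/
def QuotIsHyperfield (I : Set A) : Prop :=
  ¬ simI I 1 0 ∧ ∀ a : A, ¬ simI I a 0 → ∃ b : A, simI I (a * b) 1

/-- the Marshall equivalence associated to a multiplicative set `S`:
`a ∼_S b` iff `as = bt` for some `s,t ∈ S`; this is equality of classes in the
Marshall quotient `A/ₘS`. -/
def simM (S : Set A) (a b : A) : Prop := ∃ s ∈ S, ∃ t ∈ S, a * s = b * t

/-- `S̄ = {x : xs ∈ S for some s ∈ S}` -/
def mbar (S : Set A) : Set A := {x : A | ∃ s ∈ S, x * s ∈ S}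

/-- membership of classes in the multivalued sum of the Marshall quotient `A/ₘS`:
`[a] ∈ [b] + [c]` iff `as ∈ bt + cu` for some `s,t,u ∈ S`. -/
def qmemM (S : Set A) (a b c : A) : Prop :=
  ∃ s ∈ S, ∃ t ∈ S, ∃ u ∈ S, a * s ∈ madd (b * t) (c * u)

/-- representatives `x` with `[x] ∈ [c₁] + ⋯ + [cₙ]` in the Marshall quotient `A/ₘS` -/
def qlistSumM (S : Set A) : List A → Set A
  | [] => {x : A | simM S x 0}
  | c :: l => {x : A | ∃ y ∈ qlistSumM S l, qmemM S x c y}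

/-- the multivalued sum of the hyperfield `3 = {-1, 0, 1}` -/
def signAdd : SignType → SignType → Set SignType
  | SignType.zero, x => {x}
  | x, SignType.zero => {x}
  | SignType.pos, SignType.pos => {SignType.pos}
  | SignType.neg, SignType.neg => {SignType.neg}
  | _, _ => Set.univ

/-- a multiring morphism `A → 3`, i.e. an order of `A` -/
def IsSignMorphism (σ : A → SignType) : Prop :=
  (∀ a b c : A, a ∈ madd b c → σ a ∈ signAdd (σ b) (σ c)) ∧
  (∀ a b : A, σ (a * b) = σ a * σ b) ∧
  (∀ a : A, σ (-a) = -(σ a)) ∧ σ 0 = 0 ∧ σ 1 = 1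

/-- a prime cone of a multiring -/
def IsPrimeCone (P : Set A) : Prop :=
  (∀ a : A, a * a ∈ P) ∧ (∀ a ∈ P, ∀ b ∈ P, madd a b ⊆ P) ∧
  (∀ a ∈ P, ∀ b ∈ P, a * b ∈ P) ∧ (∀ a : A, a ∈ P ∨ -a ∈ P) ∧
  IsPrimeIdeal {x : A | x ∈ P ∧ -x ∈ P}

open Classical in
/-- the map `σ_P : A → 3` associated to a prime cone `P` -/
noncomputable def sigmaOf (P : Set A) (a : A) : SignType :=
  if a ∈ P ∧ -a ∈ P then 0 else if a ∈ P then 1 else -1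

/-- `ΣA²`: the set of elements lying in some finite sum of squares -/
def SumsOfSquares (A : Type u) [Multiring A] : Set A :=
  {x : A | ∃ l : List A, l ≠ [] ∧ x ∈ listSum (l.map fun a => a * a)}

/-- a multiring is semi-real when `-1 ∉ ΣA²` -/
def IsSemiReal (A : Type u) [Multiring A] : Prop := (-(1 : A)) ∉ SumsOfSquares A

/-- a real reduced multiring -/
def IsRealReduced (A : Type u) [Multiring A] : Prop :=
  IsSemiReal A ∧ (∀ a : A, a * a * a = a) ∧
  (∀ a b : A, madd a (a * b * b) = {a}) ∧
  (∀ a b : A, ∃ c : A, madd (a * a) (b * b) = {c})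

/-- a hyperfield: a hyperring with `1 ≠ 0` and all nonzero elements invertible -/
def IsHyperfield (A : Type u) [Multiring A] : Prop :=
  IsHyperring A ∧ (1 : A) ≠ 0 ∧ ∀ a : A, a ≠ 0 → ∃ b : A, a * b = 1

/-- a morphism of multirings -/
def IsMorphism {B : Type v} [Multiring B] (f : A → B) : Prop :=
  (∀ a b c : A, a ∈ madd b c → f a ∈ madd (f b) (f c)) ∧
  (∀ a b : A, f (a * b) = f a * f b) ∧
  (∀ a : A, f (-a) = -(f a)) ∧ f 0 = 0 ∧ f 1 = 1

/-- the radical `√α = {x : xⁿ ∈ α for some n ≥ 1}` of an ideal -/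
def radical (α : Set A) : Set A := {x : A | ∃ n : ℕ, 1 ≤ n ∧ x ^ n ∈ α}

/-- the ideal `(x) = ∪ {t₁x + ⋯ + tₙx}` generated by `x` -/
def genIdeal (x : A) : Set A :=
  {y : A | ∃ l : List A, l ≠ [] ∧ y ∈ listSum (l.map fun t => t * x)}

/-- `S_a = {x : aⁿ ∈ (x) for some n ≥ 0}` -/
def Sgen (a : A) : Set A := {x : A | ∃ n : ℕ, a ^ n ∈ genIdeal x}

/-- `a` is weak-invertible when `1 ∈ ab₁ + ⋯ + abₙ` for some `b₁,…,bₙ` -/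
def WeakInvertible (a : A) : Prop :=
  ∃ l : List A, l ≠ [] ∧ (1 : A) ∈ listSum (l.map fun b => a * b)

/-- the prime spectrum of a multiring -/
abbrev Spec (A : Type u) [Multiring A] : Type u := {p : Set A // IsPrimeIdeal p}

/-- the spectral topology on `spec A`, generated by the sets `D(a) = {p : a ∉ p}` -/
instance : TopologicalSpace (Spec A) :=
  TopologicalSpace.generateFrom {U : Set (Spec A) | ∃ a : A, U = {p : Spec A | a ∉ p.1}}

/-- the Marshall quotient `A/ₘS` is a real reduced multiring (expressed on
representatives) -/
def QuotIsRealReduced (S : Set A) : Prop :=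
  (∀ l : List A, l ≠ [] → (-(1 : A)) ∉ qlistSumM S (l.map fun a => a * a)) ∧
  (∀ a : A, simM S (a * a * a) a) ∧
  (∀ a b x : A, qmemM S x a (a * b * b) ↔ simM S x a) ∧
  (∀ a b : A, ∃ c : A, ∀ x : A, qmemM S x (a * a) (b * b) ↔ simM S x c)

/-- the Marshall quotient `A/ₘS` is a geometric von Neumann hyperring
(expressed on representatives): it is a hyperring, von Neumann regular, and
`e + eᶜ = {1}` for every idempotent `e` -/
def QuotGeometricVN (S : Set A) : Prop :=
  (∀ x b c d : A, qmemM S x (b * d) (c * d) → ∃ a : A, qmemM S a b c ∧ simM S x (a * d)) ∧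
  (∀ a : A, ∃ b : A, simM S a (a * a * b)) ∧
  (∀ e x : A, simM S (e * e) e → qmemM S x 1 (-e) → simM S (e * x) 0 →
    ∀ y : A, qmemM S y e x ↔ simM S y 1)

/-- a von Neumann subgroup: a multiplicative set such that for every idempotent
`a` (with complement `aᶜ`) and every `x ∈ D_S(a, aᶜ)` there is `s ∈ S` with `xs ∈ S` -/
def IsVNSubgroup (S : Set A) : Prop :=
  IsMultiplicative S ∧
    ∀ a x ac : A, a * a = a → ac ∈ madd 1 (-a) → a * ac = 0 →
      (∃ u ∈ S, ∃ v ∈ S, ∃ w ∈ S, x * u ∈ madd (a * v) (ac * w)) →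
      ∃ s ∈ S, x * s ∈ S

/-- a preorder of a multiring -/
def IsPreorderSet (T : Set A) : Prop :=
  (∀ a : A, a * a ∈ T) ∧ (∀ a ∈ T, ∀ b ∈ T, a * b ∈ T) ∧ (∀ a ∈ T, ∀ b ∈ T, madd a b ⊆ T)

/-- `1 + T = ∪ {1 + t : t ∈ T}` -/
def oneAdd (T : Set A) : Set A := {x : A | ∃ t ∈ T, x ∈ madd 1 t}

/-- `ΣḞ²`: elements lying in some finite sum of squares of nonzero elements -/
def sumSqNonzero (A : Type u) [Multiring A] : Set A :=
  {x : A | ∃ l : List A, l ≠ [] ∧ (∀ a ∈ l, a ≠ 0) ∧ x ∈ listSum (l.map fun a => a * a)}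

/-!
Only `D(a) ⊆ D(b) → a ∈ √(b)` needs an idea. If no power of `a` lies in `(b)`, Zorn's lemma gives
an ideal `m ⊇ (b)` maximal among the ideals avoiding the powers of `a`. It is prime: for `x, y ∉ m`
the ideals `m + (x)` and `m + (y)` contain powers of `a`, while a product of an element of each
lies in `m + (xy)`, which is `m` as soon as `xy ∈ m`.
-/

lemma mem_madd_zero_left {a b : A} : a ∈ madd 0 b ↔ a = b := by
  rw [madd_comm]; exact mem_madd_zero a b

lemma zero_mul' (a : A) : 0 * a = 0 := by
  rw [mul_comm, mul_zero']

lemma madd_assoc' {z a w u v : A} (hz : z ∈ madd a w) (hw : w ∈ madd u v) :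
    ∃ h ∈ madd a u, z ∈ madd h v := by
  obtain ⟨h₁, hh₁, hz₁⟩ := madd_assoc u v a w z hw (by rwa [madd_comm] at hz)
  obtain ⟨h₂, hh₂, hz₂⟩ := madd_assoc v a u h₁ z hh₁ (by rwa [madd_comm] at hz₁)
  exact ⟨h₂, hh₂, by rwa [madd_comm] at hz₂⟩

lemma mem_madd_add_add_comm {u v u' v' z z' w : A} (hz : z ∈ madd u v) (hz' : z' ∈ madd u' v')
    (hw : w ∈ madd z z') : ∃ s ∈ madd u u', ∃ t ∈ madd v v', w ∈ madd s t := by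
  obtain ⟨h, hh, hw₁⟩ := madd_assoc u v z' z w hz hw
  obtain ⟨h₂, hh₂, hh₂'⟩ := madd_assoc' hh hz'
  obtain ⟨h₃, hh₃, hw₃⟩ := madd_assoc' hw₁ hh₂'
  rw [madd_comm] at hh₂
  obtain ⟨s, hs, hh₃'⟩ := madd_assoc' hh₃ hh₂
  obtain ⟨t, ht, hwt⟩ := madd_assoc s v v' h₃ w hh₃' hw₃
  exact ⟨s, hs, t, ht, hwt⟩

lemma mem_listSum_append {L₁ L₂ : List A} {z : A} :
    z ∈ listSum (L₁ ++ L₂) ↔ ∃ u ∈ listSum L₁, ∃ v ∈ listSum L₂, z ∈ madd u v := by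
  induction L₁ generalizing z with
  | nil =>
    refine ⟨fun hz => ⟨0, rfl, z, hz, mem_madd_zero_left.2 rfl⟩, ?_⟩
    rintro ⟨u, rfl, v, hv, hz⟩
    rwa [mem_madd_zero_left.1 hz]
  | cons c L ih =>
    constructor
    · rintro ⟨y, hy, hz⟩
      obtain ⟨u, hu, v, hv, hyuv⟩ := ih.1 hy
      obtain ⟨h, hh, hzh⟩ := madd_assoc' hz hyuv
      exact ⟨h, ⟨u, hu, hh⟩, v, hv, hzh⟩
    · rintro ⟨u, ⟨w, hw, huw⟩, v, hv, hz⟩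
      obtain ⟨h, hh, hzh⟩ := madd_assoc c w v u z huw hz
      exact ⟨h, ih.2 ⟨w, hw, v, hv, hh⟩, hzh⟩

lemma mul_mem_listSum_map {L : List A} {z : A} (hz : z ∈ listSum L) (d : A) :
    z * d ∈ listSum (L.map (· * d)) := by
  induction L generalizing z with
  | nil =>
    rcases hz with rfl
    exact zero_mul' d
  | cons c L ih =>
    obtain ⟨y, hy, hz⟩ := hz
    exact ⟨y * d, ih hy, madd_mul z c y d hz⟩

section Ideal

variable {I : Set A}

lemma IsIdeal.zero_mem (hI : IsIdeal I) : (0 : A) ∈ I := by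
  obtain ⟨⟨c, hc⟩, -, hmul⟩ := hI
  simpa only [zero_mul'] using hmul 0 c hc

lemma IsIdeal.listSum_subset (hI : IsIdeal I) {L : List A} (hL : ∀ w ∈ L, w ∈ I) :
    listSum L ⊆ I := by
  induction L with
  | nil => rintro z rfl; exact hI.zero_mem
  | cons c L ih =>
    rintro z ⟨y, hy, hz⟩
    exact hI.2.1 c (hL c List.mem_cons_self) y
      (ih (fun w hw => hL w (List.mem_cons_of_mem c hw)) hy) hz

lemma IsPrimeIdeal.mem_of_pow_mem {p : Set A} (hp : IsPrimeIdeal p) {x : A} :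
    ∀ {n : ℕ}, x ^ n ∈ p → x ∈ p
  | 0, h => absurd (pow_zero x ▸ h) hp.2.1
  | n + 1, h => (hp.2.2 _ _ (pow_succ x n ▸ h)).elim hp.mem_of_pow_mem id

lemma mem_radical_iff (hI : IsIdeal I) {x : A} : x ∈ radical I ↔ ∃ n : ℕ, x ^ n ∈ I := by
  refine ⟨fun ⟨n, _, hn⟩ => ⟨n, hn⟩, fun ⟨n, hn⟩ => ?_⟩
  rcases n with _ | n
  · -- `1 ∈ I` forces `I = A`
    refine ⟨1, le_rfl, ?_⟩
    simpa only [pow_one, mul_one] using hI.2.2 x 1 (by rwa [pow_zero] at hn)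
  · exact ⟨n + 1, n.succ_pos, hn⟩

end Ideal

section GenIdeal

lemma zero_mem_genIdeal (x : A) : (0 : A) ∈ genIdeal x :=
  ⟨[0], List.cons_ne_nil _ _, 0, rfl, (mem_madd_zero _ _).2 (zero_mul' x).symm⟩

lemma self_mem_genIdeal (x : A) : x ∈ genIdeal x :=
  ⟨[1], List.cons_ne_nil _ _, 0, rfl, (mem_madd_zero _ _).2 (one_mul x).symm⟩

lemma madd_subset_genIdeal {x u v : A} (hu : u ∈ genIdeal x) (hv : v ∈ genIdeal x) :
    madd u v ⊆ genIdeal x := by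
  obtain ⟨l₁, hl₁, hu⟩ := hu
  obtain ⟨l₂, -, hv⟩ := hv
  intro z hz
  refine ⟨l₁ ++ l₂, by simp [hl₁], ?_⟩
  rw [List.map_append]
  exact mem_listSum_append.2 ⟨u, hu, v, hv, hz⟩

lemma mul_mem_genIdeal_mul {x y : A} (hy : y ∈ genIdeal x) (c : A) :
    y * c ∈ genIdeal (x * c) := by
  obtain ⟨l, hl, hy⟩ := hy
  refine ⟨l, hl, ?_⟩
  simpa only [List.map_map, Function.comp_def, mul_assoc] using mul_mem_listSum_map hy c

lemma mul_mem_genIdeal {x u : A} (hu : u ∈ genIdeal x) (t : A) : t * u ∈ genIdeal x := by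
  obtain ⟨l, hl, hu⟩ := hu
  refine ⟨l.map (· * t), by simpa using hl, ?_⟩
  simpa only [List.map_map, Function.comp_def, mul_right_comm _ x t, mul_comm u t] using
    mul_mem_listSum_map hu t

lemma isIdeal_genIdeal (x : A) : IsIdeal (genIdeal x) :=
  ⟨⟨x, self_mem_genIdeal x⟩, fun _ hu _ hv => madd_subset_genIdeal hu hv,
    fun t _ hu => mul_mem_genIdeal hu t⟩

lemma IsIdeal.genIdeal_subset {I : Set A} (hI : IsIdeal I) {x : A} (hx : x ∈ I) :
    genIdeal x ⊆ I := by
  rintro u ⟨l, -, hu⟩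
  refine hI.listSum_subset ?_ hu
  simp only [List.mem_map]
  rintro _ ⟨t, -, rfl⟩
  exact hI.2.2 t x hx

lemma genIdeal_subset_genIdeal {x c : A} (hx : x ∈ genIdeal c) : genIdeal x ⊆ genIdeal c :=
  (isIdeal_genIdeal c).genIdeal_subset hx

lemma mul_mem_genIdeal_mul_of_mem {x y v w : A} (hv : v ∈ genIdeal x) (hw : w ∈ genIdeal y) :
    v * w ∈ genIdeal (x * y) := by
  have hxw : x * w ∈ genIdeal (x * y) := by
    simpa only [mul_comm] using mul_mem_genIdeal_mul hw x
  exact genIdeal_subset_genIdeal hxw (mul_mem_genIdeal_mul hv w)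

lemma pow_mem_genIdeal_pow {x y : A} (hy : y ∈ genIdeal x) :
    ∀ k : ℕ, y ^ k ∈ genIdeal (x ^ k)
  | 0 => by simpa only [pow_zero] using self_mem_genIdeal (1 : A)
  | k + 1 => by
    simpa only [pow_succ] using mul_mem_genIdeal_mul_of_mem (pow_mem_genIdeal_pow hy k) hy

end GenIdeal

section PrimeAvoidance

/-- the ideal `I + (x)` -/
def addGenIdeal (I : Set A) (x : A) : Set A :=
  {z : A | ∃ u ∈ I, ∃ v ∈ genIdeal x, z ∈ madd u v}

variable {I : Set A}

lemma subset_addGenIdeal (x : A) : I ⊆ addGenIdeal I x :=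
  fun u hu => ⟨u, hu, 0, zero_mem_genIdeal x, (mem_madd_zero u u).2 rfl⟩

lemma IsIdeal.mem_addGenIdeal_self (hI : IsIdeal I) (x : A) : x ∈ addGenIdeal I x :=
  ⟨0, hI.zero_mem, x, self_mem_genIdeal x, mem_madd_zero_left.2 rfl⟩

lemma isIdeal_addGenIdeal (hI : IsIdeal I) (x : A) : IsIdeal (addGenIdeal I x) := by
  refine ⟨⟨x, hI.mem_addGenIdeal_self x⟩, ?_, ?_⟩
  · rintro z ⟨u, hu, v, hv, hz⟩ z' ⟨u', hu', v', hv', hz'⟩ w hw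
    obtain ⟨s, hs, t, ht, hw⟩ := mem_madd_add_add_comm hz hz' hw
    exact ⟨s, hI.2.1 u hu u' hu' hs, t, madd_subset_genIdeal hv hv' ht, hw⟩
  · rintro t z ⟨u, hu, v, hv, hz⟩
    refine ⟨t * u, hI.2.2 t u hu, t * v, mul_mem_genIdeal hv t, ?_⟩
    simpa only [mul_comm t] using madd_mul z u v t hz

lemma IsIdeal.mul_mem_of_mem_addGenIdeal (hI : IsIdeal I) {x y z w : A} (hxy : x * y ∈ I)
    (hz : z ∈ addGenIdeal I x) (hw : w ∈ addGenIdeal I y) : z * w ∈ I := by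
  obtain ⟨u, hu, v, hv, hz⟩ := hz
  obtain ⟨u', hu', v', hv', hw⟩ := hw
  have hvv' : v * v' ∈ I := hI.genIdeal_subset hxy (mul_mem_genIdeal_mul_of_mem hv hv')
  have hvw : v * w ∈ I :=
    hI.2.1 _ (hI.2.2 v u' hu') _ hvv' (by simpa only [mul_comm v] using madd_mul w u' v' v hw)
  have huw : u * w ∈ I := by simpa only [mul_comm u] using hI.2.2 w u hu
  exact hI.2.1 _ huw _ hvw (madd_mul z u v w hz)

lemma isPrimeIdeal_of_maximal {a : A} {m : Set A}
    (hm : Maximal (fun J => IsIdeal J ∧ ∀ n : ℕ, a ^ n ∉ J) m) : IsPrimeIdeal m := by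
  have hmI : IsIdeal m := hm.prop.1
  have hma : ∀ n : ℕ, a ^ n ∉ m := hm.prop.2
  refine ⟨hmI, by simpa only [pow_zero] using hma 0, fun x y hxy => ?_⟩
  by_contra! hxy'
  -- `m + (x)` strictly contains `m`, so by maximality it meets the powers of `a`
  have meets : ∀ z ∉ m, ∃ n : ℕ, a ^ n ∈ addGenIdeal m z := by
    intro z hz
    by_contra! hav
    exact hz (hm.eq_of_subset ⟨isIdeal_addGenIdeal hmI z, hav⟩ (subset_addGenIdeal z) ▸
      hmI.mem_addGenIdeal_self z)
  obtain ⟨n, hn⟩ := meets x hxy'.1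
  obtain ⟨k, hk⟩ := meets y hxy'.2
  exact hma (n + k) (pow_add a n k ▸ hmI.mul_mem_of_mem_addGenIdeal hxy hn hk)

lemma isIdeal_sUnion_of_isChain {c : Set (Set A)} (hc : ∀ J ∈ c, IsIdeal J)
    (hchain : IsChain (· ⊆ ·) c) (hne : c.Nonempty) : IsIdeal (⋃₀ c) := by
  obtain ⟨J₀, hJ₀⟩ := hne
  refine ⟨⟨0, Set.mem_sUnion_of_mem (hc J₀ hJ₀).zero_mem hJ₀⟩, ?_, ?_⟩
  · rintro u ⟨J₁, hJ₁, hu⟩ v ⟨J₂, hJ₂, hv⟩ w hw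
    rcases hchain.total hJ₁ hJ₂ with hle | hle
    · exact Set.mem_sUnion_of_mem ((hc J₂ hJ₂).2.1 u (hle hu) v hv hw) hJ₂
    · exact Set.mem_sUnion_of_mem ((hc J₁ hJ₁).2.1 u hu v (hle hv) hw) hJ₁
  · rintro t v ⟨J, hJ, hv⟩
    exact Set.mem_sUnion_of_mem ((hc J hJ).2.2 t v hv) hJ

lemma exists_isPrimeIdeal_of_forall_pow_notMem (hI : IsIdeal I) {a : A}
    (ha : ∀ n : ℕ, a ^ n ∉ I) : ∃ p : Set A, IsPrimeIdeal p ∧ I ⊆ p ∧ a ∉ p := by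
  obtain ⟨m, hIm, hm⟩ := zorn_subset_nonempty {J : Set A | IsIdeal J ∧ ∀ n : ℕ, a ^ n ∉ J}
    (fun c hcS hchain hne => ⟨⋃₀ c,
      ⟨isIdeal_sUnion_of_isChain (fun J hJ => (hcS hJ).1) hchain hne,
        fun n ⟨J, hJ, hn⟩ => (hcS hJ).2 n hn⟩,
      fun _ => Set.subset_sUnion_of_mem⟩) I ⟨hI, ha⟩
  exact ⟨m, isPrimeIdeal_of_maximal hm, hIm, fun ham => hm.prop.2 1 (by rwa [pow_one])⟩

end PrimeAvoidance

end Multiring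

/-- The conditions `D(a) ⊆ D(b)`, `√(a) ⊆ √(b)`, `a ∈ √(b)` and `S_b ⊆ S_a`
are equivalent. -/
theorem basicOpen_subset_tfae {A : Type u} [Multiring A] (a b : A) :
    [(∀ p : Set A, Multiring.IsPrimeIdeal p → a ∉ p → b ∉ p),
     Multiring.radical (Multiring.genIdeal a) ⊆
       Multiring.radical (Multiring.genIdeal b),
     a ∈ Multiring.radical (Multiring.genIdeal b),
     Multiring.Sgen b ⊆ Multiring.Sgen a].TFAE := by
  open Multiring in
  have hrad := fun x y : A => mem_radical_iff (x := x) (isIdeal_genIdeal y)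
  tfae_have 1 → 3 := by
    intro hD
    by_contra hab
    obtain ⟨p, hp, hbp, hap⟩ := exists_isPrimeIdeal_of_forall_pow_notMem (isIdeal_genIdeal b)
      (fun n hn => hab ((hrad a b).2 ⟨n, hn⟩))
    exact hD p hp hap (hbp (self_mem_genIdeal b))
  tfae_have 3 → 1 := by
    intro hab p hp hap hbp
    obtain ⟨n, hn⟩ := (hrad a b).1 hab
    exact hap (hp.mem_of_pow_mem (hp.1.genIdeal_subset hbp hn))
  tfae_have 2 → 3 := fun h => h ((hrad a a).2 ⟨1, by simpa using self_mem_genIdeal a⟩)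
  tfae_have 3 → 2 := by
    intro hab x hx
    obtain ⟨n, hn⟩ := (hrad a b).1 hab
    obtain ⟨m, hm⟩ := (hrad x a).1 hx
    exact (hrad x b).2 ⟨m * n, pow_mul x m n ▸
      genIdeal_subset_genIdeal hn (pow_mem_genIdeal_pow hm n)⟩
  tfae_have 3 → 4 := by
    rintro hab x ⟨m, hm⟩
    obtain ⟨n, hn⟩ := (hrad a b).1 hab
    exact ⟨n * m, pow_mul a n m ▸ genIdeal_subset_genIdeal hm (pow_mem_genIdeal_pow hn m)⟩
  tfae_have 4 → 3 := fun h => (hrad a b).2 (h ⟨1, by simpa using self_mem_genIdeal b⟩)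
  tfae_finish
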